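/- arXiv:2007.06326 — 2 statements merged into one kernel-verified Lean document; each statement's English description precedes it below -/
import Mathlib

section
/- Let V = E₀ ⊕ ⋯ ⊕ E_s be a direct-sum decomposition of V into nonzero subspaces with s ≥ 1 and dim E₀ = 1, and let κ = κ(E₀,…,E_s). Then for every x̄ ∈ P(V) ∖ P(V⁰), d(x̄, P(V⁰)) ≤ s · 2^s · κ^{-2s} · ‖g(x̄)‖_∞^{-1}. -/
open scoped RealInnerProductSpace
open Filter

variable {V : Type*} [NormedAddCommGroup V] [InnerProductSpace ℝ V]

/-- The projective distance between the lines spanned by two nonzero vectors: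
`d(x̄, ȳ) = (1 − ⟨x,y⟫²/(|x|²|y|²))^{1/2}`. -/
noncomputable def projDist (x y : V) : ℝ :=
  Real.sqrt (1 - ⟪x, y⟫ ^ 2 / (‖x‖ ^ 2 * ‖y‖ ^ 2))

/-- The distance `d(x̄, P(W))` from the line spanned by `x` to the projective space of the
submodule `W`. -/
noncomputable def projDistToSub (x : V) (W : Submodule ℝ V) : ℝ :=
  sInf {r : ℝ | ∃ y : V, y ∈ W ∧ y ≠ 0 ∧ r = projDist x y}

/-- `κ(E₀,…,E_s)`: the minimal projective distance between nonzero vectors lying in sums of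
disjoint subfamilies of the `E i`. -/
noncomputable def kappa {ι : Type*} (E : ι → Submodule ℝ V) : ℝ :=
  sInf {r : ℝ | ∃ (I J : Finset ι) (x y : V), I.Nonempty ∧ J.Nonempty ∧ Disjoint I J ∧
    x ∈ (⨆ i ∈ I, E i) ∧ x ≠ 0 ∧ y ∈ (⨆ j ∈ J, E j) ∧ y ≠ 0 ∧ r = projDist x y}

/-- `Vⁱ = E_{i+1} ⊕ ⋯ ⊕ E_s`. -/
noncomputable def Vlow {s : ℕ} (E : Fin (s+1) → Submodule ℝ V) (i : ℕ) : Submodule ℝ V :=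
  ⨆ j : Fin (s+1), ⨆ _ : i < (j : ℕ), E j

/-- `Wⁱ = E₀ ⊕ ⋯ ⊕ E_i`. -/
noncomputable def Whigh {s : ℕ} (E : Fin (s+1) → Submodule ℝ V) (i : ℕ) : Submodule ℝ V :=
  ⨆ j : Fin (s+1), ⨆ _ : (j : ℕ) ≤ i, E j

/-- `‖x ∧ y‖ = (|x|²|y|² − ⟨x,y⟫²)^{1/2}`, the area of the parallelogram spanned by `x, y`. -/
noncomputable def wedgeNorm (x y : V) : ℝ :=
  Real.sqrt (‖x‖ ^ 2 * ‖y‖ ^ 2 - ⟪x, y⟫ ^ 2)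

/- ### Auxiliary lemmas -/

lemma projDist_nonneg (x y : V) : 0 ≤ projDist x y := Real.sqrt_nonneg _

lemma projDist_le_one (x y : V) : projDist x y ≤ 1 := by
  rw [projDist, Real.sqrt_le_one]
  have : 0 ≤ ⟪x, y⟫ ^ 2 / (‖x‖ ^ 2 * ‖y‖ ^ 2) := by positivity
  linarith

lemma projDist_smul_left {c : ℝ} (hc : c ≠ 0) (x y : V) :
    projDist (c • x) y = projDist x y := by
  unfold projDist
  congr 2
  rw [real_inner_smul_left, norm_smul]
  have h1 : (c * ⟪x, y⟫) ^ 2 = c ^ 2 * ⟪x, y⟫ ^ 2 := by ring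
  have h2 : (‖c‖ * ‖x‖) ^ 2 * ‖y‖ ^ 2 = c ^ 2 * (‖x‖ ^ 2 * ‖y‖ ^ 2) := by
    rw [Real.norm_eq_abs, mul_pow, sq_abs]; ring
  rw [h1, h2, mul_div_mul_left _ _ (pow_ne_zero 2 hc)]

/-- `‖a‖ · sin∠(a,b) ≤ ‖a + b‖`. -/
lemma norm_mul_projDist_le (a b : V) : ‖a‖ * projDist a b ≤ ‖a + b‖ := by
  rcases eq_or_ne a 0 with rfl | ha
  · simp only [norm_zero, zero_mul, zero_add]; positivity
  rcases eq_or_ne b 0 with rfl | hb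
  · simp [projDist]
  have hna : 0 < ‖a‖ := norm_pos_iff.mpr ha
  have hnb : 0 < ‖b‖ := norm_pos_iff.mpr hb
  have key : ‖a‖ ^ 2 * (1 - ⟪a, b⟫ ^ 2 / (‖a‖ ^ 2 * ‖b‖ ^ 2)) ≤ ‖a + b‖ ^ 2 := by
    rw [norm_add_sq_real]
    have e : ‖a‖ ^ 2 * (1 - ⟪a, b⟫ ^ 2 / (‖a‖ ^ 2 * ‖b‖ ^ 2))
        = ‖a‖ ^ 2 - ⟪a, b⟫ ^ 2 / ‖b‖ ^ 2 := by
      field_simp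
    rw [e]
    have h3 : (⟪a, b⟫ / ‖b‖ + ‖b‖) ^ 2 = ⟪a, b⟫ ^ 2 / ‖b‖ ^ 2 + 2 * ⟪a, b⟫ + ‖b‖ ^ 2 := by
      field_simp; ring
    nlinarith [sq_nonneg (⟪a, b⟫ / ‖b‖ + ‖b‖)]
  have hmul := Real.sqrt_mul (sq_nonneg ‖a‖) (1 - ⟪a, b⟫ ^ 2 / (‖a‖ ^ 2 * ‖b‖ ^ 2))
  rw [Real.sqrt_sq hna.le] at hmul
  calc ‖a‖ * projDist a b
      = Real.sqrt (‖a‖ ^ 2 * (1 - ⟪a, b⟫ ^ 2 / (‖a‖ ^ 2 * ‖b‖ ^ 2))) := by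
        rw [projDist, hmul]
    _ ≤ Real.sqrt (‖a + b‖ ^ 2) := Real.sqrt_le_sqrt key
    _ = ‖a + b‖ := Real.sqrt_sq (norm_nonneg _)

/-- If `‖u‖ = 1` then the projective distance from `u + y` to `y` is at most `‖u + y‖⁻¹`. -/
lemma projDist_add_le {u y : V} (hu : ‖u‖ = 1) (hy : y ≠ 0) (hxy : u + y ≠ 0) :
    projDist (u + y) y ≤ ‖u + y‖⁻¹ := by
  have hny : 0 < ‖y‖ := norm_pos_iff.mpr hy
  have hnx : 0 < ‖u + y‖ := norm_pos_iff.mpr hxy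
  have h1 : ⟪u + y, y⟫ = ⟪u, y⟫ + ‖y‖ ^ 2 := by
    rw [inner_add_left, real_inner_self_eq_norm_sq]
  have h2 : ‖u + y‖ ^ 2 = 1 + 2 * ⟪u, y⟫ + ‖y‖ ^ 2 := by
    rw [norm_add_sq_real, hu]; ring
  have key2 : ‖u + y‖ ^ 2 * ‖y‖ ^ 2 - ⟪u + y, y⟫ ^ 2 ≤ ‖y‖ ^ 2 := by
    rw [h1, h2]; nlinarith [sq_nonneg ⟪u, y⟫]
  have hd : (0 : ℝ) < ‖u + y‖ ^ 2 * ‖y‖ ^ 2 := by positivity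
  have key : 1 - ⟪u + y, y⟫ ^ 2 / (‖u + y‖ ^ 2 * ‖y‖ ^ 2) ≤ (‖u + y‖⁻¹) ^ 2 := by
    have e1 : 1 - ⟪u + y, y⟫ ^ 2 / (‖u + y‖ ^ 2 * ‖y‖ ^ 2)
        = (‖u + y‖ ^ 2 * ‖y‖ ^ 2 - ⟪u + y, y⟫ ^ 2) / (‖u + y‖ ^ 2 * ‖y‖ ^ 2) := by
      field_simp
    have e2 : (‖u + y‖⁻¹) ^ 2 = ‖y‖ ^ 2 / (‖u + y‖ ^ 2 * ‖y‖ ^ 2) := by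
      field_simp
    rw [e1, e2]
    exact (div_le_div_iff_of_pos_right hd).mpr key2
  calc projDist (u + y) y ≤ Real.sqrt ((‖u + y‖⁻¹) ^ 2) := Real.sqrt_le_sqrt key
    _ = ‖u + y‖⁻¹ := Real.sqrt_sq (by positivity)

/-- Membership in a binary-indexed supremum over a finset. -/
lemma mem_biSup_of_mem {ι : Type*} (E : ι → Submodule ℝ V) {I : Finset ι} {k : ι}
    (hk : k ∈ I) {v : V} (hv : v ∈ E k) : v ∈ ⨆ i ∈ I, E i :=
  (le_iSup₂ (f := fun i (_ : i ∈ I) => E i) k hk) hv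

/-- Disjoint subfamilies of an independent family of submodules have disjoint suprema. -/
lemma biSup_disjoint_biSup {ι : Type*} {E : ι → Submodule ℝ V} (hE : iSupIndep E) :
    ∀ I J : Finset ι, Disjoint I J → Disjoint (⨆ i ∈ I, E i) (⨆ j ∈ J, E j) := by
  classical
  intro I
  induction I using Finset.induction_on with
  | empty => intro J _; simp
  | @insert i I hiI ih =>
    intro J hIJ
    have hiJ : i ∉ J := (Finset.disjoint_insert_left.mp hIJ).1
    have hIJ' : Disjoint I J := (Finset.disjoint_insert_left.mp hIJ).2
    rw [Finset.iSup_insert]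
    have h1 : Disjoint (E i) ((⨆ j ∈ I, E j) ⊔ ⨆ j ∈ J, E j) := by
      have hle : ((⨆ j ∈ I, E j) ⊔ ⨆ j ∈ J, E j) ≤ ⨆ j ∈ (↑I ∪ ↑J : Set ι), E j := by
        apply sup_le
        · exact iSup₂_le fun j hj => le_iSup₂ (f := fun j (_ : j ∈ (↑I ∪ ↑J : Set ι)) => E j)
            j (Or.inl hj)
        · exact iSup₂_le fun j hj => le_iSup₂ (f := fun j (_ : j ∈ (↑I ∪ ↑J : Set ι)) => E j)
            j (Or.inr hj)
      have hnot : i ∉ (↑I ∪ ↑J : Set ι) := by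
        simp only [Set.mem_union, Finset.mem_coe]
        rintro (h | h)
        · exact hiI h
        · exact hiJ h
      exact (hE.disjoint_biSup hnot).mono_right hle
    exact Disjoint.disjoint_sup_left_of_disjoint_sup_right (ih J hIJ') h1

/-- For disjoint submodules of a finite-dimensional space, the projective
distance of nonzero vectors is uniformly bounded below. -/
lemma exists_pos_le_projDist [FiniteDimensional ℝ V] (A B : Submodule ℝ V)
    (hAB : Disjoint A B) :
    ∃ c : ℝ, 0 < c ∧ ∀ x y : V, x ∈ A → y ∈ B → x ≠ 0 → y ≠ 0 → c ≤ projDist x y := by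
  by_cases hA : A = ⊥
  · refine ⟨1, one_pos, fun x y hxA _ hx0 _ => absurd ?_ hx0⟩
    simpa [hA] using hxA
  by_cases hB : B = ⊥
  · refine ⟨1, one_pos, fun x y _ hyB _ hy0 => absurd ?_ hy0⟩
    simpa [hB] using hyB
  set K : Set (V × V) :=
    (Metric.sphere (0 : V) 1 ∩ A) ×ˢ (Metric.sphere (0 : V) 1 ∩ B) with hK
  have hKc : IsCompact K :=
    ((isCompact_sphere 0 1).inter_right A.closed_of_finiteDimensional).prod
      ((isCompact_sphere 0 1).inter_right B.closed_of_finiteDimensional)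
  have hKne : K.Nonempty := by
    obtain ⟨a, haA, ha0⟩ := Submodule.exists_mem_ne_zero_of_ne_bot hA
    obtain ⟨b, hbB, hb0⟩ := Submodule.exists_mem_ne_zero_of_ne_bot hB
    refine ⟨(‖a‖⁻¹ • a, ‖b‖⁻¹ • b), ⟨?_, A.smul_mem _ haA⟩, ⟨?_, B.smul_mem _ hbB⟩⟩
    · rw [mem_sphere_zero_iff_norm, norm_smul, norm_inv, norm_norm,
        inv_mul_cancel₀ (norm_ne_zero_iff.mpr ha0)]
    · rw [mem_sphere_zero_iff_norm, norm_smul, norm_inv, norm_norm,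
        inv_mul_cancel₀ (norm_ne_zero_iff.mpr hb0)]
  have hcont : Continuous fun p : V × V => ⟪p.1, p.2⟫ ^ 2 := continuous_inner.pow 2
  obtain ⟨p₀, hp₀K, hp₀⟩ := hKc.exists_isMaxOn hKne hcont.continuousOn
  obtain ⟨⟨ha1, haA⟩, ⟨hb1, hbB⟩⟩ := hp₀K
  rw [mem_sphere_zero_iff_norm] at ha1 hb1
  set m : ℝ := ⟪p₀.1, p₀.2⟫ ^ 2 with hm
  have hm0 : p₀.1 ≠ 0 := by
    intro h; rw [h, norm_zero] at ha1; exact zero_ne_one ha1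
  have hmle : m ≤ 1 := by
    have := abs_real_inner_le_norm p₀.1 p₀.2
    rw [ha1, hb1, mul_one] at this
    nlinarith [abs_nonneg ⟪p₀.1, p₀.2⟫, sq_abs ⟪p₀.1, p₀.2⟫]
  have hm1 : m < 1 := by
    rcases lt_or_eq_of_le hmle with h | h
    · exact h
    exfalso
    have habs : ⟪p₀.1, p₀.2⟫ = 1 ∨ ⟪p₀.1, p₀.2⟫ = -1 := by
      have hfac : (⟪p₀.1, p₀.2⟫ - 1) * (⟪p₀.1, p₀.2⟫ + 1) = 0 := by
        have : ⟪p₀.1, p₀.2⟫ ^ 2 = 1 := by rw [← hm, h]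
        nlinarith [this]
      rcases mul_eq_zero.mp hfac with h' | h'
      · exact Or.inl (by linarith)
      · exact Or.inr (by linarith)
    have hmem : p₀.1 ∈ A ⊓ B := by
      rcases habs with h' | h'
      · have : p₀.1 = p₀.2 := (inner_eq_one_iff_of_norm_eq_one ha1 hb1).mp h'
        exact ⟨haA, this ▸ hbB⟩
      · have h'' : ⟪p₀.1, -p₀.2⟫ = 1 := by rw [inner_neg_right, h', neg_neg]
        have : p₀.1 = -p₀.2 := (inner_eq_one_iff_of_norm_eq_one ha1 (by simpa using hb1)).mp h''
        exact ⟨haA, this ▸ B.neg_mem hbB⟩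
    rw [hAB.eq_bot] at hmem
    exact hm0 (Submodule.mem_bot ℝ |>.mp hmem)
  refine ⟨Real.sqrt (1 - m), Real.sqrt_pos.mpr (by linarith), fun x y hxA hyB hx0 hy0 => ?_⟩
  have hnx : 0 < ‖x‖ := norm_pos_iff.mpr hx0
  have hny : 0 < ‖y‖ := norm_pos_iff.mpr hy0
  have hmemK : (‖x‖⁻¹ • x, ‖y‖⁻¹ • y) ∈ K := by
    refine ⟨⟨?_, A.smul_mem _ hxA⟩, ⟨?_, B.smul_mem _ hyB⟩⟩
    · rw [mem_sphere_zero_iff_norm, norm_smul, norm_inv, norm_norm, inv_mul_cancel₀ hnx.ne']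
    · rw [mem_sphere_zero_iff_norm, norm_smul, norm_inv, norm_norm, inv_mul_cancel₀ hny.ne']
  have hub : ⟪‖x‖⁻¹ • x, ‖y‖⁻¹ • y⟫ ^ 2 ≤ m := hp₀ hmemK
  have hinner : ⟪‖x‖⁻¹ • x, ‖y‖⁻¹ • y⟫ ^ 2 = ⟪x, y⟫ ^ 2 / (‖x‖ ^ 2 * ‖y‖ ^ 2) := by
    have h' : ⟪‖x‖⁻¹ • x, ‖y‖⁻¹ • y⟫ = ‖x‖⁻¹ * (‖y‖⁻¹ * ⟪x, y⟫) := by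
      rw [real_inner_smul_left, real_inner_smul_right]
    rw [h', eq_div_iff (by positivity : (‖x‖ ^ 2 * ‖y‖ ^ 2) ≠ 0)]
    field_simp
  rw [hinner] at hub
  rw [projDist]
  exact Real.sqrt_le_sqrt (by linarith)

private lemma kappa_set_bddBelow {ι : Type*} (E : ι → Submodule ℝ V) :
    BddBelow {r : ℝ | ∃ (I J : Finset ι) (x y : V), I.Nonempty ∧ J.Nonempty ∧ Disjoint I J ∧
      x ∈ (⨆ i ∈ I, E i) ∧ x ≠ 0 ∧ y ∈ (⨆ j ∈ J, E j) ∧ y ≠ 0 ∧ r = projDist x y} := by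
  refine ⟨0, ?_⟩
  rintro r ⟨I, J, a, b, _, _, _, _, _, _, _, rfl⟩
  exact projDist_nonneg a b

/-- Lemma 3.7 of the paper. For a splitting `V = E₀ ⊕ ⋯ ⊕ E_s` with
`dim E₀ = 1` and `V⁰ = E₁ ⊕ ⋯ ⊕ E_s`, every `x̄ ∈ P(V) ∖ P(V⁰)` satisfies
`d(x̄, P(V⁰)) ≤ s · 2^s · κ^{-2s} · ‖g(x̄)‖_∞⁻¹`. -/
theorem stmt6 [FiniteDimensional ℝ V] (hdim : 2 ≤ Module.finrank ℝ V)
    (s : ℕ) (hs : 1 ≤ s) (E : Fin (s+1) → Submodule ℝ V)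
    (hE : DirectSum.IsInternal E) (hEne : ∀ k, E k ≠ ⊥)
    (hE0 : Module.finrank ℝ (E 0) = 1)
    (L : Fin (s+1) → V →ₗ[ℝ] V)
    (hL1 : ∀ x : V, ∑ k, L k x = x) (hL2 : ∀ k x, L k x ∈ E k)
    (u₀ : V) (hu₀ : u₀ ∈ E 0) (hu₀n : ‖u₀‖ = 1)
    (f₀ : V →ₗ[ℝ] ℝ) (hf₀ : ∀ x, L 0 x = f₀ x • u₀)
    (x : V) (hx : x ≠ 0) (hfx : f₀ x ≠ 0) :
    projDistToSub x (Vlow E 0) ≤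
      (s : ℝ) * 2 ^ s * (kappa E ^ (2 * s))⁻¹ *
        (Finset.univ.sup' Finset.univ_nonempty fun k => ‖(f₀ x)⁻¹ • L k x‖)⁻¹ := by
  classical
  have hbdd := kappa_set_bddBelow E
  -- basic Fin facts
  have hval1 : ((1 : Fin (s+1)) : ℕ) = 1 := by
    rw [Fin.val_one']
    exact Nat.mod_eq_of_lt (by omega)
  have h01 : (0 : Fin (s+1)) ≠ 1 := by
    intro h
    have := congrArg Fin.val h
    rw [hval1] at this
    exact zero_ne_one this
  -- nonzero vectors in E 0 and E 1
  obtain ⟨a₀, ha₀, ha₀0⟩ := Submodule.exists_mem_ne_zero_of_ne_bot (hEne 0)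
  obtain ⟨a₁, ha₁, ha₁0⟩ := Submodule.exists_mem_ne_zero_of_ne_bot (hEne 1)
  -- the kappa set is nonempty
  have hκne : {r : ℝ | ∃ (I J : Finset (Fin (s+1))) (x y : V), I.Nonempty ∧ J.Nonempty ∧
      Disjoint I J ∧ x ∈ (⨆ i ∈ I, E i) ∧ x ≠ 0 ∧ y ∈ (⨆ j ∈ J, E j) ∧ y ≠ 0 ∧
      r = projDist x y}.Nonempty := by
    refine ⟨projDist a₀ a₁, {0}, {1}, a₀, a₁, Finset.singleton_nonempty _,
      Finset.singleton_nonempty _, Finset.disjoint_singleton.mpr h01,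
      mem_biSup_of_mem E (Finset.mem_singleton_self 0) ha₀, ha₀0,
      mem_biSup_of_mem E (Finset.mem_singleton_self 1) ha₁, ha₁0, rfl⟩
  -- kappa ≤ 1
  have hκ1 : kappa E ≤ 1 := by
    rcases hκne with ⟨r, hr⟩
    calc kappa E ≤ r := csInf_le hbdd hr
      _ ≤ 1 := by
          obtain ⟨I, J, a, b, _, _, _, _, _, _, _, rfl⟩ := hr
          exact projDist_le_one a b
  -- kappa > 0
  have hκpos : 0 < kappa E := by
    have hdisj : ∀ I J : Finset (Fin (s+1)), Disjoint I J →
        Disjoint (⨆ i ∈ I, E i) (⨆ j ∈ J, E j) :=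
      biSup_disjoint_biSup hE.submodule_iSupIndep
    have hpair : ∀ p : Finset (Fin (s+1)) × Finset (Fin (s+1)), ∃ c : ℝ, 0 < c ∧
        (Disjoint p.1 p.2 → ∀ a b : V, a ∈ (⨆ i ∈ p.1, E i) → b ∈ (⨆ j ∈ p.2, E j) →
          a ≠ 0 → b ≠ 0 → c ≤ projDist a b) := by
      intro p
      by_cases hd : Disjoint p.1 p.2
      · obtain ⟨c, hc, h⟩ := exists_pos_le_projDist _ _ (hdisj _ _ hd)
        exact ⟨c, hc, fun _ a b haA hbB ha hb => h a b haA hbB ha hb⟩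
      · exact ⟨1, one_pos, fun h => absurd h hd⟩
    choose e he1 he2 using hpair
    set ε : ℝ := Finset.univ.inf' ⟨(∅, ∅), Finset.mem_univ _⟩ e with hε
    have hεpos : 0 < ε := (Finset.lt_inf'_iff _).mpr fun p _ => he1 p
    have hεle : ∀ r ∈ {r : ℝ | ∃ (I J : Finset (Fin (s+1))) (x y : V), I.Nonempty ∧
        J.Nonempty ∧ Disjoint I J ∧ x ∈ (⨆ i ∈ I, E i) ∧ x ≠ 0 ∧ y ∈ (⨆ j ∈ J, E j) ∧
        y ≠ 0 ∧ r = projDist x y}, ε ≤ r := by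
      rintro r ⟨I, J, a, b, _, _, hIJ, haA, ha0, hbB, hb0, rfl⟩
      exact (Finset.inf'_le e (Finset.mem_univ (I, J))).trans
        (he2 (I, J) hIJ a b haA hbB ha0 hb0)
    exact hεpos.trans_le (le_csInf hκne hεle)
  -- normalized vector
  set x' : V := (f₀ x)⁻¹ • x with hx'def
  have hLx' : ∀ k, L k x' = (f₀ x)⁻¹ • L k x := fun k => map_smul (L k) _ x
  have hf₀x' : f₀ x' = 1 := by
    rw [hx'def, map_smul, smul_eq_mul, inv_mul_cancel₀ hfx]
  have hL0x' : L 0 x' = u₀ := by rw [hf₀ x', hf₀x', one_smul]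
  have hx'0 : x' ≠ 0 := by
    intro h
    rw [h, map_zero] at hf₀x'
    exact zero_ne_one hf₀x'
  have hN : 0 < ‖x'‖ := norm_pos_iff.mpr hx'0
  -- rewrite the sup' in terms of x'
  have hMrw : (fun k => ‖(f₀ x)⁻¹ • L k x‖) = fun k => ‖L k x'‖ := by
    funext k; rw [hLx' k]
  rw [hMrw]
  set M : ℝ := Finset.univ.sup' Finset.univ_nonempty fun k => ‖L k x'‖ with hM
  have hM1 : 1 ≤ M := by
    have h0 : ‖L 0 x'‖ = 1 := by rw [hL0x', hu₀n]
    rw [hM]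
    calc (1 : ℝ) = ‖L 0 x'‖ := h0.symm
      _ ≤ _ := Finset.le_sup' (fun k : Fin (s+1) => ‖L k x'‖) (Finset.mem_univ 0)
  have hMpos : 0 < M := lt_of_lt_of_le one_pos hM1
  -- components are bounded: ‖L k x'‖ * κ ≤ ‖x'‖
  have hcomp : ∀ k, ‖L k x'‖ * kappa E ≤ ‖x'‖ := by
    intro k
    rcases eq_or_ne (L k x') 0 with h | h
    · rw [h, norm_zero, zero_mul]; positivity
    set b : V := x' - L k x' with hbdef
    have hab : L k x' + b = x' := by rw [hbdef]; abel
    rcases eq_or_ne b 0 with hb | hb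
    · have hxk : x' = L k x' := by
        have := hab; rw [hb, add_zero] at this; exact this.symm
      calc ‖L k x'‖ * kappa E ≤ ‖L k x'‖ * 1 :=
            mul_le_mul_of_nonneg_left hκ1 (norm_nonneg _)
        _ = ‖x'‖ := by rw [mul_one, ← hxk]
    · have hbsum : b = ∑ j ∈ Finset.univ.erase k, L j x' := by
        have h1 : L k x' + ∑ j ∈ Finset.univ.erase k, L j x' = x' :=
          (Finset.add_sum_erase Finset.univ (fun j : Fin (s+1) => L j x')
            (Finset.mem_univ k)).trans (hL1 x')
        rw [hbdef]
        exact (eq_sub_of_add_eq' h1).symm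
      have hbmem : b ∈ ⨆ j ∈ Finset.univ.erase k, E j := by
        rw [hbsum]
        exact Submodule.sum_mem _ fun j hj => mem_biSup_of_mem E hj (hL2 j x')
      have hJne : (Finset.univ.erase k).Nonempty := by
        rw [← Finset.card_pos, Finset.card_erase_of_mem (Finset.mem_univ k)]
        simp only [Finset.card_univ, Fintype.card_fin]
        omega
      have hκle : kappa E ≤ projDist (L k x') b :=
        csInf_le hbdd ⟨{k}, Finset.univ.erase k, L k x', b, Finset.singleton_nonempty _,
          hJne, Finset.disjoint_singleton_left.mpr (Finset.notMem_erase k _),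
          mem_biSup_of_mem E (Finset.mem_singleton_self k) (hL2 k x'), h, hbmem, hb, rfl⟩
      calc ‖L k x'‖ * kappa E ≤ ‖L k x'‖ * projDist (L k x') b :=
            mul_le_mul_of_nonneg_left hκle (norm_nonneg _)
        _ ≤ ‖L k x' + b‖ := norm_mul_projDist_le _ _
        _ = ‖x'‖ := by rw [hab]
  -- the distance bound: projDistToSub x (Vlow E 0) ≤ ‖x'‖⁻¹
  have hVlow : ∀ j : Fin (s+1), (0 : ℕ) < (j : ℕ) → E j ≤ Vlow E 0 := fun j hj =>
    le_iSup₂ (f := fun (j : Fin (s+1)) (_ : (0 : ℕ) < (j : ℕ)) => E j) j hj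
  have hDbdd : BddBelow {r : ℝ | ∃ y : V, y ∈ Vlow E 0 ∧ y ≠ 0 ∧ r = projDist x y} := by
    refine ⟨0, ?_⟩
    rintro r ⟨y, _, _, rfl⟩
    exact projDist_nonneg x y
  have hDle : projDistToSub x (Vlow E 0) ≤ ‖x'‖⁻¹ := by
    set y : V := x' - u₀ with hydef
    have hxy : u₀ + y = x' := by rw [hydef]; abel
    rcases eq_or_ne y 0 with hy | hy
    · -- x' = u₀, so ‖x'‖ = 1 and any element of P(V⁰) works
      have hx'u : x' = u₀ := by
        have := hxy; rw [hy, add_zero] at this; exact this.symm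
      have hnx1 : ‖x'‖ = 1 := by rw [hx'u, hu₀n]
      have ha₁mem : a₁ ∈ Vlow E 0 := hVlow 1 (by rw [hval1]; omega) ha₁
      calc projDistToSub x (Vlow E 0) ≤ projDist x a₁ :=
            csInf_le hDbdd ⟨a₁, ha₁mem, ha₁0, rfl⟩
        _ ≤ 1 := projDist_le_one x a₁
        _ = ‖x'‖⁻¹ := by rw [hnx1, inv_one]
    · have hymem : y ∈ Vlow E 0 := by
        have hysum : y = ∑ j ∈ Finset.univ.erase 0, L j x' := by
          have h1 : L 0 x' + ∑ j ∈ Finset.univ.erase 0, L j x' = x' :=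
            (Finset.add_sum_erase Finset.univ (fun j : Fin (s+1) => L j x')
              (Finset.mem_univ 0)).trans (hL1 x')
          rw [hL0x'] at h1
          rw [hydef]
          exact (eq_sub_of_add_eq' h1).symm
        rw [hysum]
        refine Submodule.sum_mem _ fun j hj => ?_
        have hj0 : j ≠ 0 := (Finset.mem_erase.mp hj).1
        have hjpos : (0 : ℕ) < (j : ℕ) := by
          rcases Nat.eq_zero_or_pos (j : ℕ) with h | h
          · exact absurd (Fin.ext h : j = 0) hj0
          · exact h
        exact hVlow j hjpos (hL2 j x')
      have hd1 : projDist x y = projDist x' y := by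
        rw [hx'def, projDist_smul_left (inv_ne_zero hfx)]
      have hd2 : projDist x' y ≤ ‖x'‖⁻¹ := by
        rw [← hxy]
        exact projDist_add_le hu₀n hy (hxy ▸ hx'0)
      calc projDistToSub x (Vlow E 0) ≤ projDist x y :=
            csInf_le hDbdd ⟨y, hymem, hy, rfl⟩
        _ = projDist x' y := hd1
        _ ≤ ‖x'‖⁻¹ := hd2
  -- combine
  have hκppos : 0 < kappa E ^ (2 * s) := pow_pos hκpos _
  have hκκ : kappa E ^ (2 * s) ≤ kappa E := by
    calc kappa E ^ (2 * s) ≤ kappa E ^ 1 :=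
          pow_le_pow_of_le_one hκpos.le hκ1 (by omega)
      _ = kappa E := pow_one _
  have hMN : M ≤ ‖x'‖ / kappa E ^ (2 * s) := by
    apply Finset.sup'_le
    intro k _
    rw [le_div_iff₀ hκppos]
    calc ‖L k x'‖ * kappa E ^ (2 * s) ≤ ‖L k x'‖ * kappa E :=
          mul_le_mul_of_nonneg_left hκκ (norm_nonneg _)
      _ ≤ ‖x'‖ := hcomp k
  have hMt : M * kappa E ^ (2 * s) ≤ ‖x'‖ := (le_div_iff₀ hκppos).mp hMN
  have h2 : ‖x'‖⁻¹ ≤ (kappa E ^ (2 * s))⁻¹ * M⁻¹ := by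
    have h3 : ‖x'‖⁻¹ ≤ (M * kappa E ^ (2 * s))⁻¹ :=
      inv_anti₀ (by positivity) hMt
    rw [mul_inv, mul_comm] at h3
    exact h3
  have hs2 : (1 : ℝ) ≤ (s : ℝ) * 2 ^ s := by
    have h1 : (1 : ℝ) ≤ (s : ℝ) := by exact_mod_cast hs
    have h2' : (1 : ℝ) ≤ 2 ^ s := one_le_pow₀ one_le_two
    nlinarith
  calc projDistToSub x (Vlow E 0) ≤ ‖x'‖⁻¹ := hDle
    _ ≤ (kappa E ^ (2 * s))⁻¹ * M⁻¹ := h2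
    _ ≤ (s : ℝ) * 2 ^ s * ((kappa E ^ (2 * s))⁻¹ * M⁻¹) :=
        le_mul_of_one_le_left (by positivity) hs2
    _ = (s : ℝ) * 2 ^ s * (kappa E ^ (2 * s))⁻¹ * M⁻¹ := by ring
end

section
/- For every ε > 0 there exists δ > 0 (depending only on ε and V) such that the following holds. Let V = E₀ ⊕ ⋯ ⊕ E_s be any direct-sum decomposition of V into nonzero subspaces with κ(E₀,…,E_s) ≥ ε, let 1 ≤ i ≤ s, write Wⁱ = E₀ ⊕ ⋯ ⊕ E_i and Vⁱ = E_{i+1} ⊕ ⋯ ⊕ E_s, and let P = P_{(Vⁱ)^⊥} be the orthogonal projection onto (Vⁱ)^⊥. Then for all x, y ∈ Wⁱ, ‖Px ∧ Py‖ ≥ δ · ‖x ∧ y‖, i.e. (|Px|²|Py|² − ⟨Px,Py⟩²)^{1/2} ≥ δ · (|x|²|y|² − ⟨x,y⟩²)^{1/2}. -/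
/-!
Write `U = Vⁱ` and `P = P_{Uᗮ}`. For `z ∈ Wⁱ` the vector `z - Pz` lies in `U`, is orthogonal to
`Pz`, and `d(z̄, (z - Pz)‾) = |Pz| / |z|`; so `κ ≥ ε` forces `|Pz| ≥ min ε 1 · |z|` on `Wⁱ`.
A linear map `f` with `|f z| ≥ c |z|` on a subspace shrinks areas there by at most `c²`:
replacing `y` by `y - t x` changes neither `‖x ∧ y‖` nor `‖f x ∧ f y‖`, and for the right `t`
the vector `f (y - t x)` is orthogonal to `f x`, so
`c² ‖x ∧ y‖ ≤ c |x| · c |y - t x| ≤ |f x| |f (y - t x)| = ‖f x ∧ f y‖`.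
Hence `δ = (min ε 1)²` works.
-/

open scoped RealInnerProductSpace
open Filter

variable {V : Type*} [NormedAddCommGroup V] [InnerProductSpace ℝ V]

lemma wedgeNorm_sub_smul_right (x y : V) (t : ℝ) : wedgeNorm x (y - t • x) = wedgeNorm x y := by
  unfold wedgeNorm
  congr 1
  rw [← real_inner_self_eq_norm_sq (y - t • x), ← real_inner_self_eq_norm_sq x,
    ← real_inner_self_eq_norm_sq y]
  simp only [inner_sub_left, inner_sub_right, real_inner_smul_left, real_inner_smul_right,
    real_inner_comm x y]
  ring

lemma wedgeNorm_le_norm_mul_norm (x y : V) : wedgeNorm x y ≤ ‖x‖ * ‖y‖ := by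
  rw [wedgeNorm, ← Real.sqrt_sq (by positivity : 0 ≤ ‖x‖ * ‖y‖)]
  exact Real.sqrt_le_sqrt (by nlinarith [sq_nonneg ⟪x, y⟫])

lemma wedgeNorm_of_inner_eq_zero {x y : V} (h : ⟪x, y⟫ = 0) : wedgeNorm x y = ‖x‖ * ‖y‖ := by
  rw [wedgeNorm, h, ← mul_pow, zero_pow two_ne_zero, sub_zero, Real.sqrt_sq (by positivity)]

lemma inner_sub_smul_self_eq_zero (x y : V) : ⟪x, y - (⟪x, y⟫ / ‖x‖ ^ 2) • x⟫ = 0 := by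
  rcases eq_or_ne x 0 with rfl | hx
  · simp
  · rw [inner_sub_right, real_inner_smul_right, real_inner_self_eq_norm_sq,
      div_mul_cancel₀ _ (pow_ne_zero 2 (norm_ne_zero_iff.mpr hx)), sub_self]

theorem sq_mul_wedgeNorm_le_wedgeNorm_map {F : Type*} [NormedAddCommGroup F]
    [InnerProductSpace ℝ F] (f : V →ₗ[ℝ] F) (W : Submodule ℝ V) {c : ℝ}
    (hc : 0 ≤ c) (hf : ∀ z ∈ W, c * ‖z‖ ≤ ‖f z‖) {x y : V} (hx : x ∈ W) (hy : y ∈ W) :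
    c ^ 2 * wedgeNorm x y ≤ wedgeNorm (f x) (f y) := by
  set t := ⟪f x, f y⟫ / ‖f x‖ ^ 2
  have hfy' : f (y - t • x) = f y - t • f x := by rw [map_sub, map_smul]
  have hperp : ⟪f x, f (y - t • x)⟫ = 0 := hfy' ▸ inner_sub_smul_self_eq_zero _ _
  calc c ^ 2 * wedgeNorm x y = c ^ 2 * wedgeNorm x (y - t • x) := by
        rw [wedgeNorm_sub_smul_right]
    _ ≤ c ^ 2 * (‖x‖ * ‖y - t • x‖) := by gcongr; exact wedgeNorm_le_norm_mul_norm _ _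
    _ = (c * ‖x‖) * (c * ‖y - t • x‖) := by ring
    _ ≤ ‖f x‖ * ‖f (y - t • x)‖ :=
        mul_le_mul (hf x hx) (hf _ (W.sub_mem hy (W.smul_mem t hx))) (by positivity)
          (norm_nonneg _)
    _ = wedgeNorm (f x) (f y) := by
        rw [← wedgeNorm_of_inner_eq_zero hperp, hfy', wedgeNorm_sub_smul_right]

lemma projDist_add_left_of_inner_eq_zero {u w : V} (h : ⟪u, w⟫ = 0) (hw : w ≠ 0) :
    projDist (u + w) w = ‖u‖ / ‖u + w‖ := by
  have hnorm : ‖u + w‖ ^ 2 = ‖u‖ ^ 2 + ‖w‖ ^ 2 := by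
    rw [norm_add_sq_real, h, mul_zero, add_zero]
  have hinner : ⟪u + w, w⟫ = ‖w‖ ^ 2 := by
    rw [inner_add_left, h, zero_add, real_inner_self_eq_norm_sq]
  have hw' : 0 < ‖w‖ := norm_pos_iff.mpr hw
  have huw : 0 < ‖u + w‖ := by nlinarith [sq_nonneg ‖u‖, norm_nonneg (u + w)]
  rw [projDist, hinner, ← Real.sqrt_sq (by positivity : 0 ≤ ‖u‖ / ‖u + w‖)]
  congr 1
  field_simp
  linear_combination hnorm

theorem mul_norm_le_norm_starProjection_orthogonal (U W : Submodule ℝ V)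
    [U.HasOrthogonalProjection] {ε : ℝ} (hε : ε ≤ 1)
    (h : ∀ z ∈ W, ∀ w ∈ U, z ≠ 0 → w ≠ 0 → ε ≤ projDist z w) {z : V} (hz : z ∈ W) :
    ε * ‖z‖ ≤ ‖Uᗮ.starProjection z‖ := by
  rw [Submodule.starProjection_orthogonal_val]
  set w := U.starProjection z
  rcases eq_or_ne w 0 with hw | hw
  · rw [hw, sub_zero]
    exact mul_le_of_le_one_left (norm_nonneg z) hε
  have hz0 : z ≠ 0 := by rintro rfl; simp [w] at hw
  have hperp : ⟪z - w, w⟫ = 0 :=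
    Submodule.inner_left_of_mem_orthogonal (U.starProjection_apply_mem z)
      (U.sub_starProjection_mem_orthogonal z)
  have hdist : ε ≤ ‖z - w‖ / ‖z‖ := by
    have hdist_eq := projDist_add_left_of_inner_eq_zero hperp hw
    rw [sub_add_cancel] at hdist_eq
    exact hdist_eq ▸ h z hz w (U.starProjection_apply_mem z) hz0 hw
  exact (le_div_iff₀ (norm_pos_iff.mpr hz0)).mp hdist

lemma kappa_le_projDist {ι : Type*} (E : ι → Submodule ℝ V) {I J : Finset ι}
    (hIJ : Disjoint I J) {x y : V} (hx : x ∈ ⨆ i ∈ I, E i) (hx0 : x ≠ 0)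
    (hy : y ∈ ⨆ j ∈ J, E j) (hy0 : y ≠ 0) : kappa E ≤ projDist x y := by
  have nonempty_of_mem {K : Finset ι} {v : V} (hv : v ∈ ⨆ i ∈ K, E i) (hv0 : v ≠ 0) :
      K.Nonempty := by
    rw [Finset.nonempty_iff_ne_empty]
    rintro rfl
    simp only [Finset.notMem_empty, iSup_false, iSup_bot, Submodule.mem_bot] at hv
    exact hv0 hv
  refine csInf_le ⟨0, ?_⟩ ⟨I, J, x, y, nonempty_of_mem hx hx0, nonempty_of_mem hy hy0, hIJ,
    hx, hx0, hy, hy0, rfl⟩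
  rintro r ⟨-, -, -, -, -, -, -, -, -, -, -, rfl⟩
  exact Real.sqrt_nonneg _

lemma kappa_le_projDist_of_mem_Whigh_of_mem_Vlow {s : ℕ} (E : Fin (s+1) → Submodule ℝ V)
    (i : ℕ) {x y : V} (hx : x ∈ Whigh E i) (hx0 : x ≠ 0) (hy : y ∈ Vlow E i) (hy0 : y ≠ 0) :
    kappa E ≤ projDist x y := by
  refine kappa_le_projDist E (I := Finset.univ.filter fun j : Fin (s+1) => (j : ℕ) ≤ i)
    (J := Finset.univ.filter fun j : Fin (s+1) => i < (j : ℕ))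
    (Finset.disjoint_filter.mpr fun j _ hj => not_lt.mpr hj) ?_ hx0 ?_ hy0
  · simpa [Whigh] using hx
  · simpa [Vlow] using hy

theorem stmt10_general [FiniteDimensional ℝ V] :
    ∀ ε > (0 : ℝ), ∃ δ > (0 : ℝ), ∀ (s : ℕ) (E : Fin (s+1) → Submodule ℝ V),
      DirectSum.IsInternal E → (∀ k, E k ≠ ⊥) → ε ≤ kappa E →
      ∀ i : ℕ, 1 ≤ i → i ≤ s →
      ∀ x ∈ Whigh E i, ∀ y ∈ Whigh E i,
        δ * wedgeNorm x y ≤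
          wedgeNorm (Submodule.orthogonalProjectionOnto (Vlow E i)ᗮ x : V)
            (Submodule.orthogonalProjectionOnto (Vlow E i)ᗮ y : V) := by
  intro ε hε
  refine ⟨min ε 1 ^ 2, by positivity, ?_⟩
  intro s E _ _ hκ i _ _ x hx y hy
  have hbound : ∀ z ∈ Whigh E i, min ε 1 * ‖z‖ ≤ ‖(Vlow E i)ᗮ.starProjection z‖ :=
    fun z hz => mul_norm_le_norm_starProjection_orthogonal _ _ (min_le_right ε 1)
      (fun v hv w hw hv0 hw0 => (min_le_left ε 1).trans
        (hκ.trans (kappa_le_projDist_of_mem_Whigh_of_mem_Vlow E i hv hv0 hw hw0))) hz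
  simpa only [Submodule.coe_orthogonalProjectionOnto_apply, ContinuousLinearMap.coe_coe] using
    sq_mul_wedgeNorm_le_wedgeNorm_map ((Vlow E i)ᗮ.starProjection : V →ₗ[ℝ] V) (Whigh E i)
      (by positivity) hbound hx hy

/-- Lemma 5.3 of the paper. For every `ε > 0` there is `δ > 0` such that
for every splitting `V = E₀ ⊕ ⋯ ⊕ E_s` with `κ(E₀,…,E_s) ≥ ε` and every `1 ≤ i ≤ s`,
all `x, y ∈ Wⁱ = E₀ ⊕ ⋯ ⊕ E_i` satisfy
`‖P_{(Vⁱ)^⊥}x ∧ P_{(Vⁱ)^⊥}y‖ ≥ δ · ‖x ∧ y‖`. -/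
theorem stmt10 [FiniteDimensional ℝ V] (hdim : 2 ≤ Module.finrank ℝ V) :
    ∀ ε > (0 : ℝ), ∃ δ > (0 : ℝ), ∀ (s : ℕ) (E : Fin (s+1) → Submodule ℝ V),
      DirectSum.IsInternal E → (∀ k, E k ≠ ⊥) → ε ≤ kappa E →
      ∀ i : ℕ, 1 ≤ i → i ≤ s →
      ∀ x ∈ Whigh E i, ∀ y ∈ Whigh E i,
        δ * wedgeNorm x y ≤
          wedgeNorm (Submodule.orthogonalProjectionOnto (Vlow E i)ᗮ x : V)
            (Submodule.orthogonalProjectionOnto (Vlow E i)ᗮ y : V) :=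
  stmt10_general
end
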